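/- Let Q1, Q2 : A → ℝ be functions on a finite nonempty set A and let β ∈ [0,1]. Then |(β · max Q1 + (1-β) · min Q1) - (β · max Q2 + (1-β) · min Q2)| ≤ max_{a∈A} |Q1(a) - Q2(a)|. That is, the balanced backup operator Q ↦ β·max Q + (1-β)·min Q is a non-expansion in the sup norm. -/

import Mathlib

namespace Finset

variable {ι α : Type*} [AddCommGroup α] [LinearOrder α] [IsOrderedAddMonoid α]
  {s : Finset ι} (hs : s.Nonempty) (f g : ι → α)

theorem sup'_sub_sup'_le_sup'_abs_sub :
    s.sup' hs f - s.sup' hs g ≤ s.sup' hs (fun i => |f i - g i|) := by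
  rw [sub_le_iff_le_add]
  refine sup'_le hs f fun i hi => ?_
  calc f i ≤ |f i - g i| + g i := sub_le_iff_le_add.1 (le_abs_self _)
    _ ≤ s.sup' hs (fun i => |f i - g i|) + s.sup' hs g :=
        add_le_add (le_sup' (fun i => |f i - g i|) hi) (le_sup' g hi)

theorem inf'_sub_inf'_le_sup'_abs_sub :
    s.inf' hs f - s.inf' hs g ≤ s.sup' hs (fun i => |f i - g i|) := by
  rw [sub_le_comm]
  refine le_inf' hs g fun i hi => ?_
  calc s.inf' hs f - s.sup' hs (fun i => |f i - g i|) ≤ f i - |f i - g i| :=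
        sub_le_sub (inf'_le f hi) (le_sup' (fun i => |f i - g i|) hi)
    _ ≤ g i := sub_le_comm.1 (le_abs_self _)

theorem abs_sup'_sub_sup'_le_sup'_abs_sub :
    |s.sup' hs f - s.sup' hs g| ≤ s.sup' hs (fun i => |f i - g i|) := by
  refine abs_sub_le_iff.2 ⟨sup'_sub_sup'_le_sup'_abs_sub hs f g, ?_⟩
  simpa only [abs_sub_comm] using sup'_sub_sup'_le_sup'_abs_sub hs g f

theorem abs_inf'_sub_inf'_le_sup'_abs_sub :
    |s.inf' hs f - s.inf' hs g| ≤ s.sup' hs (fun i => |f i - g i|) := by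
  refine abs_sub_le_iff.2 ⟨inf'_sub_inf'_le_sup'_abs_sub hs f g, ?_⟩
  simpa only [abs_sub_comm] using inf'_sub_inf'_le_sup'_abs_sub hs g f

end Finset

theorem abs_convexCombo_sub_convexCombo_le {𝕜 : Type*} [Field 𝕜] [LinearOrder 𝕜] [IsStrictOrderedRing 𝕜]
    {β x y x' y' c : 𝕜} (hβ0 : 0 ≤ β) (hβ1 : β ≤ 1)
    (hx : |x - x'| ≤ c) (hy : |y - y'| ≤ c) :
    |(β * x + (1 - β) * y) - (β * x' + (1 - β) * y')| ≤ c := by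
  have hβ1' : 0 ≤ 1 - β := sub_nonneg.2 hβ1
  calc |(β * x + (1 - β) * y) - (β * x' + (1 - β) * y')|
        = |β * (x - x') + (1 - β) * (y - y')| := by congr 1; ring
    _ ≤ β * |x - x'| + (1 - β) * |y - y'| := by
        refine (abs_add_le _ _).trans_eq ?_
        rw [abs_mul, abs_mul, abs_of_nonneg hβ0, abs_of_nonneg hβ1']
    _ ≤ β * c + (1 - β) * c := by gcongr
    _ = c := by ring

theorem balanced_backup_nonexpansion (A : Type*) [Fintype A] [Nonempty A]
    (Q1 Q2 : A → ℝ) (β : ℝ) (hβ0 : 0 ≤ β) (hβ1 : β ≤ 1) :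
    |(β * Finset.univ.sup' Finset.univ_nonempty Q1
        + (1 - β) * Finset.univ.inf' Finset.univ_nonempty Q1)
      - (β * Finset.univ.sup' Finset.univ_nonempty Q2
        + (1 - β) * Finset.univ.inf' Finset.univ_nonempty Q2)| ≤
      Finset.univ.sup' Finset.univ_nonempty (fun a => |Q1 a - Q2 a|) :=
  abs_convexCombo_sub_convexCombo_le hβ0 hβ1
    (Finset.abs_sup'_sub_sup'_le_sup'_abs_sub _ Q1 Q2)
    (Finset.abs_inf'_sub_inf'_le_sup'_abs_sub _ Q1 Q2)
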